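/- arXiv:1503.05235 — 3 statements merged into one kernel-verified Lean document; each statement's English description precedes it below -/
import Mathlib

section
/- Theorem 3.1: Let 1 ≤ a < b ≤ ∞, let ν, ζ ∈ Ψ(a,b), and set ψ(p) = ν(p)/ζ(p). Let A be an invertible d×d real matrix and f ∈ Gψ. Then f∘A ∈ Gν with ‖f∘A‖_{Gν} ≤ φ(Gζ, |det A|^{-1}) · ‖f‖_{Gψ}, where φ(Gζ, δ) = sup_{p∈(a,b)} δ^{1/p}/ζ(p). -/
/-!
A linear change of variables `x ↦ A x` rescales Lebesgue measure by `|det A|⁻¹`, so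
`‖f ∘ A‖_p = |det A|^{-1/p} ‖f‖_p` for every exponent `p`. Splitting the weight as
`ν(p) = ζ(p) · ψ(p)` writes each term `‖f ∘ A‖_p / ν(p)` of the `Gν`-norm as the product of
`|det A|^{-1/p} / ζ(p)` and `‖f‖_p / ψ(p)`, and each factor is bounded by its supremum over `p`.
-/

open MeasureTheory ENNReal

/-- The Grand Lebesgue norm `‖f‖_{Gψ} = sup_{p ∈ (a,b)} ‖f‖_{L^p}/ψ(p)`. -/
noncomputable def gnorm (a b : ℝ≥0∞) (ψ : ℝ≥0∞ → ℝ) {X : Type*} [MeasurableSpace X]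
    (μ : Measure X) (f : X → ℝ) : ℝ≥0∞ :=
  ⨆ p ∈ Set.Ioo a b, eLpNorm f p μ / ENNReal.ofReal (ψ p)

open Matrix

theorem eLpNorm_div_le_gnorm {a b p : ℝ≥0∞} {ψ : ℝ≥0∞ → ℝ} {X : Type*} [MeasurableSpace X]
    {μ : Measure X} {f : X → ℝ} (hp : p ∈ Set.Ioo a b) :
    eLpNorm f p μ / ENNReal.ofReal (ψ p) ≤ gnorm a b ψ μ f :=
  le_iSup₂ (f := fun p _ => eLpNorm f p μ / ENNReal.ofReal (ψ p)) p hp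

theorem Matrix.measurableEmbedding_toLin' {ι : Type*} [Fintype ι] [DecidableEq ι]
    {A : Matrix ι ι ℝ} (hA : A.det ≠ 0) : MeasurableEmbedding (toLin' A) := by
  have hdet : LinearMap.det (toLin' A) ≠ 0 := by rwa [LinearMap.det_toLin']
  exact (LinearMap.equivOfDetNeZero _ hdet).toContinuousLinearEquiv.toHomeomorph.measurableEmbedding

theorem eLpNorm_comp_mulVec {ι E : Type*} [Fintype ι] [DecidableEq ι] [NormedAddCommGroup E]
    {A : Matrix ι ι ℝ} (hA : A.det ≠ 0) (f : (ι → ℝ) → E) (p : ℝ≥0∞) :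
    eLpNorm (fun x => f (A *ᵥ x)) p volume
      = (ENNReal.ofReal |A.det|)⁻¹ ^ (1 / p.toReal) * eLpNorm f p volume := by
  have hmap : Measure.map (toLin' A) volume = (ENNReal.ofReal |A.det|)⁻¹ • volume := by
    rw [Real.map_matrix_volume_pi_eq_smul_volume_pi hA, abs_inv,
      ENNReal.ofReal_inv_of_pos (abs_pos.mpr hA)]
  have hc : (ENNReal.ofReal |A.det|)⁻¹ ≠ 0 := ENNReal.inv_ne_zero.mpr ofReal_ne_top
  calc eLpNorm (fun x => f (A *ᵥ x)) p volume
      = eLpNorm f p (Measure.map (toLin' A) volume) :=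
        ((measurableEmbedding_toLin' hA).eLpNorm_map_measure).symm
    _ = (ENNReal.ofReal |A.det|)⁻¹ ^ (1 / p.toReal) * eLpNorm f p volume := by
        rw [hmap, eLpNorm_smul_measure_of_ne_zero hc, one_div, toReal_inv, one_div, smul_eq_mul]

theorem ENNReal.mul_div_ofReal_eq_div_mul_div {ν ζ : ℝ} (hζ : 0 < ζ) (c x : ℝ≥0∞) :
    c * x / ENNReal.ofReal ν = c / ENNReal.ofReal ζ * (x / ENNReal.ofReal (ν / ζ)) := by
  have hsplit : ENNReal.ofReal ν = ENNReal.ofReal ζ * ENNReal.ofReal (ν / ζ) := by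
    rw [← ENNReal.ofReal_mul hζ.le, mul_div_cancel₀ _ hζ.ne']
  rw [hsplit, ENNReal.mul_div_mul_comm (Or.inl (ENNReal.ofReal_pos.mpr hζ).ne')
    (Or.inl ofReal_ne_top)]

theorem gnorm_dilation_bound_general {d : ℕ} (a b : ℝ≥0∞)
    (ν ζ : ℝ≥0∞ → ℝ)
    (hζ : ∃ c > 0, ∀ p ∈ Set.Ioo a b, c ≤ ζ p)
    (A : Matrix (Fin d) (Fin d) ℝ) (hA : A.det ≠ 0)
    (f : (Fin d → ℝ) → ℝ) :
    gnorm a b ν volume (fun x => f (A.mulVec x))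
      ≤ (⨆ p ∈ Set.Ioo a b,
          (ENNReal.ofReal |A.det|)⁻¹ ^ (1 / p.toReal) / ENNReal.ofReal (ζ p))
        * gnorm a b (fun p => ν p / ζ p) volume f := by
  obtain ⟨c, hc, hcζ⟩ := hζ
  refine iSup₂_le fun p hp => ?_
  rw [eLpNorm_comp_mulVec hA,
    ENNReal.mul_div_ofReal_eq_div_mul_div (hc.trans_le (hcζ p hp))]
  exact mul_le_mul'
    (le_iSup₂ (f := fun p _ => (ENNReal.ofReal |A.det|)⁻¹ ^ (1 / p.toReal) / ENNReal.ofReal (ζ p))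
      p hp)
    (eLpNorm_div_le_gnorm hp)

/-- **Theorem 3.1.** For `ν, ζ ∈ Ψ(a,b)`, `ψ = ν/ζ`, `A` invertible and
`f ∈ Gψ`, one has `‖f∘A‖_{Gν} ≤ φ(Gζ, |det A|⁻¹) ‖f‖_{Gψ}` where
`φ(Gζ, δ) = sup_{p ∈ (a,b)} δ^{1/p}/ζ(p)`. -/
theorem gnorm_dilation_bound {d : ℕ} (a b : ℝ≥0∞) (ha : 1 ≤ a) (hab : a < b)
    (ν ζ : ℝ≥0∞ → ℝ)
    (hνc : ContinuousOn ν (Set.Ioo a b)) (hν : ∃ c > 0, ∀ p ∈ Set.Ioo a b, c ≤ ν p)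
    (hζc : ContinuousOn ζ (Set.Ioo a b)) (hζ : ∃ c > 0, ∀ p ∈ Set.Ioo a b, c ≤ ζ p)
    (A : Matrix (Fin d) (Fin d) ℝ) (hA : A.det ≠ 0)
    (f : (Fin d → ℝ) → ℝ) (hf : AEStronglyMeasurable f volume)
    (hfG : gnorm a b (fun p => ν p / ζ p) volume f < ∞)
    (hφ : (⨆ p ∈ Set.Ioo a b,
        (ENNReal.ofReal |A.det|)⁻¹ ^ (1 / p.toReal) / ENNReal.ofReal (ζ p)) < ∞) :
    gnorm a b ν volume (fun x => f (A.mulVec x))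
      ≤ (⨆ p ∈ Set.Ioo a b,
          (ENNReal.ofReal |A.det|)⁻¹ ^ (1 / p.toReal) / ENNReal.ofReal (ζ p))
        * gnorm a b (fun p => ν p / ζ p) volume f :=
  gnorm_dilation_bound_general a b ν ζ hζ A hA f
end

section
/- Theorem 4.1: Let α > 0, 1 ≤ a < b ≤ ∞, ψ, ζ ∈ Ψ(a,b), and define ν(p) = ψ(p)·ζ(p). Let A be an invertible d×d matrix. Then for every f with ‖f‖_{Gψ_α} < ∞ (where the weighted GLS norm uses |f|_{p,α} = (∫|f(x)|^p |x|^α dx)^{1/p}), one has ‖f∘A‖_{Gν_α} ≤ sup_{p∈(a,b)} (|det A|^{-1} ‖A^{-1}‖^{α})^{1/p}/ζ(p) · ‖f‖_{Gψ_α}. -/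
open MeasureTheory ENNReal Matrix

/-- The weighted Grand Lebesgue norm `‖f‖_{Gψ_α} = sup_{p ∈ (a,b)} |f|_{p,α}/ψ(p)`,
realized as the GLS norm with respect to the weighted measure `|x|^α dx`. -/
noncomputable def gnormW (a b : ℝ≥0∞) (ψ : ℝ≥0∞ → ℝ) {X : Type*} [MeasurableSpace X]
    (μ : Measure X) (f : X → ℝ) : ℝ≥0∞ :=
  ⨆ p ∈ Set.Ioo a b, eLpNorm f p μ / ENNReal.ofReal (ψ p)

/-- The weight measure `μ_α(D) = ∫_D ‖x‖^α dx` on `ℝ^d` with the Euclidean norm. -/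
noncomputable def wMeasure (d : ℕ) (α : ℝ) : Measure (EuclideanSpace ℝ (Fin d)) :=
  volume.withDensity fun x => ENNReal.ofReal (‖x‖ ^ α)

/-!
From `‖x‖ ≤ ‖A⁻¹‖ ‖A x‖` the weight satisfies `|x|^α ≤ ‖A⁻¹‖^α |A x|^α`, and the linear change
of variables `y = A x` contributes the Jacobian factor `|det A|⁻¹`. Hence
`∫ g(A x) |x|^α dx ≤ |det A|⁻¹ ‖A⁻¹‖^α ∫ g(y) |y|^α dy` for every `g ≥ 0`, which for
`g = |f|^p` is `|f∘A|_{p,α} ≤ (|det A|⁻¹ ‖A⁻¹‖^α)^{1/p} |f|_{p,α}`. Dividing by `ψ(p) ζ(p)` and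
taking the supremum over `p` splits the bound into the two stated factors.
-/

lemma ENNReal.ofReal_mul_ofReal_le (s t : ℝ) :
    ENNReal.ofReal s * ENNReal.ofReal t ≤ ENNReal.ofReal (s * t) := by
  rcases le_total 0 s with hs | hs
  · rw [ENNReal.ofReal_mul hs]
  · simp [ENNReal.ofReal_of_nonpos hs]

lemma ENNReal.div_ofReal_mul_le {x y K : ℝ≥0∞} (s t : ℝ) (h : x ≤ K * y) :
    x / ENNReal.ofReal (s * t) ≤ K / ENNReal.ofReal t * (y / ENNReal.ofReal s) :=
  calc x / ENNReal.ofReal (s * t) ≤ K * y / (ENNReal.ofReal t * ENNReal.ofReal s) :=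
        ENNReal.div_le_div h (by rw [mul_comm s]; exact ENNReal.ofReal_mul_ofReal_le t s)
    _ = K / ENNReal.ofReal t * (y / ENNReal.ofReal s) :=
        ENNReal.mul_div_mul_comm (Or.inr ENNReal.ofReal_ne_top) (Or.inl ENNReal.ofReal_ne_top)

lemma ContinuousLinearEquiv.norm_rpow_le {𝕜 E F : Type*} [NontriviallyNormedField 𝕜]
    [NormedAddCommGroup E] [NormedSpace 𝕜 E] [NormedAddCommGroup F] [NormedSpace 𝕜 F]
    (L : E ≃L[𝕜] F) {α : ℝ} (hα : 0 ≤ α) (x : E) :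
    ‖x‖ ^ α ≤ ‖(L.symm : F →L[𝕜] E)‖ ^ α * ‖L x‖ ^ α := by
  rw [← Real.mul_rpow (norm_nonneg _) (norm_nonneg _)]
  refine Real.rpow_le_rpow (norm_nonneg _) ?_ hα
  simpa using (L.symm : F →L[𝕜] E).le_opNorm (L x)

section HaarDilation

variable {E : Type*} [NormedAddCommGroup E] [NormedSpace ℝ E] [MeasurableSpace E] [BorelSpace E]
  [FiniteDimensional ℝ E] (μ : Measure E) [μ.IsAddHaarMeasure]

theorem MeasureTheory.Measure.lintegral_comp_continuousLinearEquiv (L : E ≃L[ℝ] E)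
    (g : E → ℝ≥0∞) :
    ∫⁻ x, g (L x) ∂μ = ENNReal.ofReal |LinearMap.det (L : E →ₗ[ℝ] E)|⁻¹ * ∫⁻ y, g y ∂μ := by
  have hdet : LinearMap.det (L : E →ₗ[ℝ] E) ≠ 0 :=
    (L : E ≃ₗ[ℝ] E).isUnit_det'.ne_zero
  calc ∫⁻ x, g (L x) ∂μ = ∫⁻ y, g y ∂(Measure.map (L : E →ₗ[ℝ] E) μ) :=
        (L.toHomeomorph.measurableEmbedding.lintegral_map g).symm
    _ = _ := by
        rw [μ.map_linearMap_addHaar_eq_smul_addHaar hdet, lintegral_smul_measure, abs_inv,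
          smul_eq_mul]

theorem lintegral_comp_le_withDensity_rpow_norm (L : E ≃L[ℝ] E) {α : ℝ} (hα : 0 ≤ α)
    (g : E → ℝ≥0∞) :
    ∫⁻ x, g (L x) ∂μ.withDensity (fun x => ENNReal.ofReal (‖x‖ ^ α))
      ≤ ENNReal.ofReal (|LinearMap.det (L : E →ₗ[ℝ] E)|⁻¹ * ‖(L.symm : E →L[ℝ] E)‖ ^ α)
        * ∫⁻ y, g y ∂μ.withDensity (fun x => ENNReal.ofReal (‖x‖ ^ α)) := by
  set w : E → ℝ≥0∞ := fun x => ENNReal.ofReal (‖x‖ ^ α)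
  have hw : Measurable w := by fun_prop
  have hw_lt_top : ∀ᵐ x ∂μ, w x < ∞ := .of_forall fun _ => ENNReal.ofReal_lt_top
  have hwL (x : E) : w x ≤ ENNReal.ofReal (‖(L.symm : E →L[ℝ] E)‖ ^ α) * w (L x) := by
    rw [← ENNReal.ofReal_mul (by positivity)]
    exact ENNReal.ofReal_le_ofReal (L.norm_rpow_le hα x)
  simp only [lintegral_withDensity_eq_lintegral_mul_non_measurable μ hw hw_lt_top, Pi.mul_apply]
  calc ∫⁻ x, w x * g (L x) ∂μ
      ≤ ∫⁻ x, ENNReal.ofReal (‖(L.symm : E →L[ℝ] E)‖ ^ α) * (w (L x) * g (L x)) ∂μ :=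
        lintegral_mono fun x => by rw [← mul_assoc]; gcongr; exact hwL x
    _ = _ := by
        rw [lintegral_const_mul' _ _ ENNReal.ofReal_ne_top,
          μ.lintegral_comp_continuousLinearEquiv L (fun y => w y * g y), ← mul_assoc,
          ENNReal.ofReal_mul' (by positivity)]
        ring

end HaarDilation

theorem MeasureTheory.eLpNorm_comp_le_of_lintegral_comp_le {X : Type*} [MeasurableSpace X]
    {μ : Measure X} {T : X → X} {C : ℝ≥0∞}
    (hT : ∀ g : X → ℝ≥0∞, ∫⁻ x, g (T x) ∂μ ≤ C * ∫⁻ x, g x ∂μ)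
    (f : X → ℝ) {p : ℝ≥0∞} (hp0 : p ≠ 0) (hp : p ≠ ∞) :
    eLpNorm (fun x => f (T x)) p μ ≤ C ^ (1 / p.toReal) * eLpNorm f p μ := by
  simp only [eLpNorm_eq_lintegral_rpow_enorm_toReal hp0 hp]
  have hq : 0 ≤ 1 / p.toReal := by positivity
  rw [← ENNReal.mul_rpow_of_nonneg _ _ hq]
  exact ENNReal.rpow_le_rpow (hT fun y => ‖f y‖ₑ ^ p.toReal) hq

theorem gnormW_mul_le_of_eLpNorm_le {X : Type*} [MeasurableSpace X] {a b : ℝ≥0∞}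
    {ψ ζ : ℝ≥0∞ → ℝ} {μ ν : Measure X} {f g : X → ℝ} {K : ℝ≥0∞ → ℝ≥0∞}
    (h : ∀ p ∈ Set.Ioo a b, eLpNorm g p ν ≤ K p * eLpNorm f p μ) :
    gnormW a b (fun p => ψ p * ζ p) ν g
      ≤ (⨆ p ∈ Set.Ioo a b, K p / ENNReal.ofReal (ζ p)) * gnormW a b ψ μ f :=
  iSup₂_le fun p hp => (ENNReal.div_ofReal_mul_le _ _ (h p hp)).trans <|
    mul_le_mul' (le_iSup₂_of_le p hp le_rfl) (le_iSup₂_of_le p hp le_rfl)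

namespace Matrix

variable {𝕜 n : Type*} [RCLike 𝕜] [Fintype n] [DecidableEq n]

noncomputable def toEuclideanCLE (A : Matrix n n 𝕜) (hA : IsUnit A.det) :
    EuclideanSpace 𝕜 n ≃L[𝕜] EuclideanSpace 𝕜 n :=
  .equivOfInverse (toEuclideanCLM (𝕜 := 𝕜) A) (toEuclideanCLM (𝕜 := 𝕜) A⁻¹)
    (fun x => show (toEuclideanCLM (𝕜 := 𝕜) A⁻¹ * toEuclideanCLM (𝕜 := 𝕜) A) x = x by
      rw [← map_mul, nonsing_inv_mul A hA, map_one]; rfl)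
    (fun x => show (toEuclideanCLM (𝕜 := 𝕜) A * toEuclideanCLM (𝕜 := 𝕜) A⁻¹) x = x by
      rw [← map_mul, mul_nonsing_inv A hA, map_one]; rfl)

lemma det_toEuclideanCLE (A : Matrix n n 𝕜) (hA : IsUnit A.det) :
    LinearMap.det (A.toEuclideanCLE hA : EuclideanSpace 𝕜 n →ₗ[𝕜] EuclideanSpace 𝕜 n)
      = A.det := by
  change LinearMap.det (toEuclideanLin A) = A.det
  rw [toEuclideanLin_eq_toLin_orthonormal, LinearMap.det_toLin]

end Matrix

theorem gnorm_weighted_dilation_bound_general {d : ℕ} (a b : ℝ≥0∞)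
    (α : ℝ) (hα : 0 < α)
    (ψ ζ : ℝ≥0∞ → ℝ)
    (A : Matrix (Fin d) (Fin d) ℝ) (hA : IsUnit A.det)
    (f : EuclideanSpace ℝ (Fin d) → ℝ) :
    gnormW a b (fun p => ψ p * ζ p) (wMeasure d α)
        (fun x => f (Matrix.toEuclideanCLM (𝕜 := ℝ) A x))
      ≤ (⨆ p ∈ Set.Ioo a b,
          (ENNReal.ofReal (|A.det|⁻¹ * ‖Matrix.toEuclideanCLM (𝕜 := ℝ) A⁻¹‖ ^ α))
              ^ (1 / p.toReal) / ENNReal.ofReal (ζ p))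
        * gnormW a b ψ (wMeasure d α) f := by
  refine gnormW_mul_le_of_eLpNorm_le fun p hp => ?_
  have hdilation := lintegral_comp_le_withDensity_rpow_norm volume (A.toEuclideanCLE hA) hα.le
  rw [Matrix.det_toEuclideanCLE] at hdilation
  exact eLpNorm_comp_le_of_lintegral_comp_le hdilation f (pos_of_gt hp.1).ne' hp.2.ne_top

/-- **Theorem 4.1.** For `ψ, ζ ∈ Ψ(a,b)`, `ν = ψ·ζ`, `A` invertible and
`f` with finite weighted norm `‖f‖_{Gψ_α}`, one has
`‖f∘A‖_{Gν_α} ≤ (sup_{p∈(a,b)} (|det A|⁻¹ ‖A⁻¹‖^α)^{1/p}/ζ(p)) · ‖f‖_{Gψ_α}`. -/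
theorem gnorm_weighted_dilation_bound {d : ℕ} (a b : ℝ≥0∞) (ha : 1 ≤ a) (hab : a < b)
    (α : ℝ) (hα : 0 < α)
    (ψ ζ : ℝ≥0∞ → ℝ)
    (hψc : ContinuousOn ψ (Set.Ioo a b)) (hψ : ∃ c > 0, ∀ p ∈ Set.Ioo a b, c ≤ ψ p)
    (hζc : ContinuousOn ζ (Set.Ioo a b)) (hζ : ∃ c > 0, ∀ p ∈ Set.Ioo a b, c ≤ ζ p)
    (A : Matrix (Fin d) (Fin d) ℝ) (hA : IsUnit A.det)
    (f : EuclideanSpace ℝ (Fin d) → ℝ)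
    (hf : AEStronglyMeasurable f (wMeasure d α))
    (hfG : gnormW a b ψ (wMeasure d α) f < ∞) :
    gnormW a b (fun p => ψ p * ζ p) (wMeasure d α)
        (fun x => f (Matrix.toEuclideanCLM (𝕜 := ℝ) A x))
      ≤ (⨆ p ∈ Set.Ioo a b,
          (ENNReal.ofReal (|A.det|⁻¹ * ‖Matrix.toEuclideanCLM (𝕜 := ℝ) A⁻¹‖ ^ α))
              ^ (1 / p.toReal) / ENNReal.ofReal (ζ p))
        * gnormW a b ψ (wMeasure d α) f :=
  gnorm_weighted_dilation_bound_general a b α hα ψ ζ A hA f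
end

section
/- Recurrence for ball mixed-norms: let θ⁽ᵈ⁾(p₁,…,p_d) = ‖𝟙_{B_d}‖_{p₁,…,p_d} where B_d is the Euclidean unit ball in ℝ^d and the mixed norm is iterated coordinate-wise. Then for 1 ≤ p_i < ∞, θ⁽ᵈ⁺¹⁾(p₁,…,p_{d+1}) = θ⁽ᵈ⁾(p₁,…,p_d) · B(1/2, 1 + (p_{d+1}/2)(1/p₁ + ⋯ + 1/p_d))^{1/p_{d+1}}, where B(α,β) is the Euler beta function. -/
open MeasureTheory

/-- The anisotropic (mixed) Lebesgue norm on `ℝ^d`, with each coordinate its own factor,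
defined by iterating the coordinate-wise integrals:
`‖f‖_{p₁,…,p_{d+1}} = (∫ (‖f(·,t)‖_{p₁,…,p_d})^{p_{d+1}} dt)^{1/p_{d+1}}`. -/
noncomputable def mixedNorm : ∀ d : ℕ, (Fin d → ℝ) → ((Fin d → ℝ) → ℝ) → ℝ
  | 0, _, f => |f (fun i => i.elim0)|
  | d + 1, p, f =>
      (∫ t : ℝ, (mixedNorm d (fun i => p i.castSucc) fun x => f (Fin.snoc x t))
          ^ p (Fin.last d)) ^ (1 / p (Fin.last d))

/-- The Euler beta function `B(a,b) = Γ(a)Γ(b)/Γ(a+b)`. -/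
noncomputable def eulerBeta (a b : ℝ) : ℝ :=
  Real.Gamma a * Real.Gamma b / Real.Gamma (a + b)

/-!
The slice of the unit ball of `ℝ^{d+1}` at height `t ∈ (-1, 1)` is the unit ball of `ℝ^d` dilated
by `√(1 - t²)`, and the mixed norm is homogeneous of degree `∑ 1/pᵢ` under dilations, so the slice
contributes `(1 - t²)^{(1/2)∑ 1/pᵢ} θ⁽ᵈ⁾`. The outer integral becomes `∫_{-1}^{1} (1 - t²)^c dt`,
which `t = 2u - 1` turns into `4^c B(c+1, c+1)`, and Legendre's duplication formula into
`B(1/2, c+1)`.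
-/

open Set

lemma mixedNorm_nonneg : ∀ (d : ℕ) (p : Fin d → ℝ) (f : (Fin d → ℝ) → ℝ), 0 ≤ mixedNorm d p f
  | 0, _, _ => abs_nonneg _
  | d + 1, _, _ =>
    Real.rpow_nonneg (integral_nonneg fun _ => Real.rpow_nonneg (mixedNorm_nonneg d _ _) _) _

lemma mixedNorm_zero : ∀ (d : ℕ) (p : Fin d → ℝ), (∀ i, p i ≠ 0) →
    mixedNorm d p (fun _ => 0) = 0
  | 0, _, _ => by simp [mixedNorm]
  | d + 1, p, hp => by
    rw [mixedNorm, mixedNorm_zero d _ fun i => hp i.castSucc]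
    simp [Real.zero_rpow (hp _), Real.zero_rpow (inv_ne_zero (hp _))]

lemma mixedNorm_comp_div : ∀ (d : ℕ) (p : Fin d → ℝ), (∀ i, p i ≠ 0) →
    ∀ (f : (Fin d → ℝ) → ℝ) {r : ℝ}, 0 < r →
    mixedNorm d p (fun x => f (fun i => x i / r)) = r ^ (∑ i, 1 / p i) * mixedNorm d p f
  | 0, _, _, f, _, _ => by
    simp only [mixedNorm, Finset.univ_eq_empty, Finset.sum_empty, Real.rpow_zero, one_mul]
    exact congrArg (|f ·|) (Subsingleton.elim _ _)
  | d + 1, p, hp, f, r, hr => by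
    have hslice (t : ℝ) : (mixedNorm d (fun i => p i.castSucc) fun x =>
        f fun i => (Fin.snoc x t : Fin (d + 1) → ℝ) i / r)
        = r ^ (∑ i : Fin d, 1 / p i.castSucc) *
          mixedNorm d (fun i => p i.castSucc) fun x => f (Fin.snoc x (t / r)) := by
      have hsnoc (x : Fin d → ℝ) : (fun i => (Fin.snoc x t : Fin (d + 1) → ℝ) i / r)
          = Fin.snoc (fun i => x i / r) (t / r) := Fin.comp_snoc (· / r) x t
      simp only [hsnoc]
      exact mixedNorm_comp_div d _ (fun i => hp i.castSucc) (fun y => f (Fin.snoc y (t / r))) hr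
    rw [mixedNorm, mixedNorm]
    simp only [hslice]
    set q := p (Fin.last d)
    set s := ∑ i : Fin d, 1 / p i.castSucc
    set N : ℝ → ℝ := fun u => mixedNorm d (fun i => p i.castSucc) fun x => f (Fin.snoc x u)
    have hrs : 0 ≤ r ^ s := Real.rpow_nonneg hr.le _
    have hN (u : ℝ) : 0 ≤ N u := mixedNorm_nonneg _ _ _
    have hIN : 0 ≤ ∫ u, N u ^ q := integral_nonneg fun u => Real.rpow_nonneg (hN u) _
    calc (∫ t, (r ^ s * N (t / r)) ^ q) ^ (1 / q)
        = ((r ^ s) ^ q * r * ∫ u, N u ^ q) ^ (1 / q) := by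
          simp only [Real.mul_rpow hrs (hN _)]
          rw [integral_const_mul, Measure.integral_comp_div (fun u => N u ^ q), abs_of_pos hr,
            smul_eq_mul, mul_assoc]
      _ = r ^ (∑ i, 1 / p i) * (∫ u, N u ^ q) ^ (1 / q) := by
          rw [Real.mul_rpow (by positivity) hIN, Real.mul_rpow (by positivity) hr.le,
            ← Real.rpow_mul hrs, mul_one_div_cancel (hp _), Real.rpow_one, ← Real.rpow_add hr,
            Fin.sum_univ_castSucc (f := fun i => 1 / p i)]

lemma integral_rpow_mul_one_sub_rpow {a b : ℝ} (ha : 0 < a) (hb : 0 < b) :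
    ∫ x in (0 : ℝ)..1, x ^ (a - 1) * (1 - x) ^ (b - 1) = eulerBeta a b := by
  have hcast : Complex.betaIntegral a b
      = ↑(∫ x in (0 : ℝ)..1, x ^ (a - 1) * (1 - x) ^ (b - 1)) := by
    rw [Complex.betaIntegral, ← intervalIntegral.integral_ofReal]
    refine intervalIntegral.integral_congr fun x hx => ?_
    rw [uIcc_of_le zero_le_one] at hx
    simp only [Complex.ofReal_mul, Complex.ofReal_cpow hx.1,
      Complex.ofReal_cpow (sub_nonneg.2 hx.2)]
    push_cast
    rfl
  rw [show eulerBeta a b = _ from ProbabilityTheory.beta_eq_betaIntegralReal a b ha hb, hcast,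
    Complex.ofReal_re]

lemma eulerBeta_self {s : ℝ} (hs : 0 < s) :
    eulerBeta s s = 2 ^ (1 - 2 * s) * eulerBeta (1 / 2) s := by
  have hΓ₁ : Real.Gamma (s + 1 / 2) ≠ 0 := (Real.Gamma_pos_of_pos (by positivity)).ne'
  have hΓ₂ : Real.Gamma (2 * s) ≠ 0 := (Real.Gamma_pos_of_pos (by positivity)).ne'
  rw [eulerBeta, eulerBeta, Real.Gamma_one_half_eq, ← two_mul, add_comm (1 / 2), mul_div_assoc',
    div_eq_div_iff hΓ₂ hΓ₁]
  linear_combination Real.Gamma s * Real.Gamma_mul_Gamma_add_half s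

lemma integral_one_sub_sq_rpow {c : ℝ} (hc : -1 < c) :
    ∫ t in (-1 : ℝ)..1, (1 - t ^ 2) ^ c = eulerBeta (1 / 2) (c + 1) := by
  set F : ℝ → ℝ := fun x => x ^ c * (1 - x) ^ c
  have hsubst : ∫ t in (-1 : ℝ)..1, (1 - t ^ 2) ^ c
      = ∫ t in (-1 : ℝ)..1, (4 : ℝ) ^ c * F (1 / 2 * t + 1 / 2) := by
    -- `1 - t² = 4 u (1 - u)` for `t = 2u - 1`
    refine intervalIntegral.integral_congr fun t ht => ?_
    rw [uIcc_of_le (by norm_num)] at ht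
    have h₁ : 0 ≤ 1 / 2 * t + 1 / 2 := by linarith [ht.1]
    have h₂ : 0 ≤ 1 - (1 / 2 * t + 1 / 2) := by linarith [ht.2]
    simp only [F]
    rw [← Real.mul_rpow h₁ h₂, ← Real.mul_rpow (by norm_num) (mul_nonneg h₁ h₂)]
    congr 1
    ring
  have hF : ∫ x in (0 : ℝ)..1, F x = eulerBeta (c + 1) (c + 1) := by
    simpa using integral_rpow_mul_one_sub_rpow (a := c + 1) (b := c + 1) (by linarith) (by linarith)
  have hpow : (4 : ℝ) ^ c * 2 * 2 ^ (1 - 2 * (c + 1)) = 1 := by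
    rw [show (4 : ℝ) = 2 ^ (2 : ℝ) by norm_num, ← Real.rpow_mul zero_le_two,
      ← Real.rpow_add_one two_ne_zero, ← Real.rpow_add two_pos]
    norm_num [show 2 * c + 1 + (1 - 2 * (c + 1)) = 0 by ring]
  rw [hsubst, intervalIntegral.integral_const_mul,
    intervalIntegral.integral_comp_mul_add F (by norm_num : (1 / 2 : ℝ) ≠ 0),
    show (1 / 2 : ℝ) * -1 + 1 / 2 = 0 by norm_num, show (1 / 2 : ℝ) * 1 + 1 / 2 = 1 by norm_num,
    hF, eulerBeta_self (by linarith), smul_eq_mul]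
  linear_combination eulerBeta (1 / 2) (c + 1) * hpow

noncomputable def ballIndicator (d : ℕ) : (Fin d → ℝ) → ℝ :=
  Set.indicator {x : Fin d → ℝ | ∑ i, x i ^ 2 ≤ 1} fun _ => 1

section Slices

variable {d : ℕ}

lemma sum_sq_snoc (x : Fin d → ℝ) (t : ℝ) :
    ∑ i, (Fin.snoc x t : Fin (d + 1) → ℝ) i ^ 2 = ∑ i, x i ^ 2 + t ^ 2 := by
  simp [Fin.sum_univ_castSucc]

lemma ballIndicator_snoc_of_sq_lt_one {t : ℝ} (ht : t ^ 2 < 1) (x : Fin d → ℝ) :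
    ballIndicator (d + 1) (Fin.snoc x t) = ballIndicator d fun i => x i / √(1 - t ^ 2) := by
  have h : 0 < 1 - t ^ 2 := sub_pos.2 ht
  simp only [ballIndicator, indicator_apply, mem_ofPred_eq, sum_sq_snoc, div_pow, ← Finset.sum_div,
    Real.sq_sqrt h.le, div_le_one h, le_sub_iff_add_le]

lemma ballIndicator_snoc_of_one_lt_sq {t : ℝ} (ht : 1 < t ^ 2) (x : Fin d → ℝ) :
    ballIndicator (d + 1) (Fin.snoc x t) = 0 := by
  refine indicator_of_notMem ?_ _
  simp only [mem_ofPred_eq, sum_sq_snoc, not_le]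
  linarith [Finset.sum_nonneg fun i (_ : i ∈ Finset.univ) => sq_nonneg (x i)]

lemma mixedNorm_ballIndicator_snoc {p : Fin d → ℝ} (hp : ∀ i, p i ≠ 0) {t : ℝ} (ht : t ^ 2 ≠ 1) :
    mixedNorm d p (fun x => ballIndicator (d + 1) (Fin.snoc x t))
      = (Ioo (-1) 1).indicator (fun t => (1 - t ^ 2) ^ ((∑ i, 1 / p i) / 2)) t
        * mixedNorm d p (ballIndicator d) := by
  rcases ht.lt_or_gt with ht | ht
  · have hmem : t ∈ Ioo (-1) 1 := abs_lt.1 ((sq_lt_one_iff_abs_lt_one t).1 ht)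
    have h : 0 ≤ 1 - t ^ 2 := sub_nonneg.2 ht.le
    rw [indicator_of_mem hmem, funext (ballIndicator_snoc_of_sq_lt_one ht),
      mixedNorm_comp_div d p hp _ (Real.sqrt_pos.2 (sub_pos.2 ht)), Real.sqrt_eq_rpow,
      ← Real.rpow_mul h, one_div_mul_eq_div]
  · have hmem : t ∉ Ioo (-1) 1 := fun hmem =>
      ht.not_gt ((sq_lt_one_iff_abs_lt_one t).2 (abs_lt.2 hmem))
    rw [indicator_of_notMem hmem, zero_mul, funext (ballIndicator_snoc_of_one_lt_sq ht)]
    exact mixedNorm_zero d p hp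

lemma integral_mixedNorm_ballIndicator_snoc_rpow {p : Fin d → ℝ} (hp : ∀ i, 0 < p i) {q : ℝ}
    (hq : 0 < q) :
    ∫ t, mixedNorm d p (fun x => ballIndicator (d + 1) (Fin.snoc x t)) ^ q
      = mixedNorm d p (ballIndicator d) ^ q * eulerBeta (1 / 2) (1 + q / 2 * ∑ i, 1 / p i) := by
  set s := ∑ i, 1 / p i
  set θ := mixedNorm d p (ballIndicator d)
  have hs : 0 ≤ s := Finset.sum_nonneg fun i _ => (one_div_pos.2 (hp i)).le
  have hθ : 0 ≤ θ := mixedNorm_nonneg _ _ _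
  have hslices : (fun t => mixedNorm d p (fun x => ballIndicator (d + 1) (Fin.snoc x t)) ^ q)
      =ᵐ[volume] fun t =>
        θ ^ q * (Ioo (-1) 1).indicator (fun t => (1 - t ^ 2) ^ (q / 2 * s)) t := by
    have hsq : ∀ᵐ t : ℝ, t ^ 2 ≠ 1 := ae_iff.2 <| measure_mono_null
      (fun t ht => sq_eq_one_iff.1 (not_not.1 ht)) ((toFinite {1, -1}).measure_zero volume)
    filter_upwards [hsq] with t ht
    rw [mixedNorm_ballIndicator_snoc (fun i => (hp i).ne') ht]
    by_cases hmem : t ∈ Ioo (-1) 1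
    · have h : 0 ≤ 1 - t ^ 2 := sub_nonneg.2 ((sq_lt_one_iff_abs_lt_one t).2 (abs_lt.2 hmem)).le
      rw [indicator_of_mem hmem, indicator_of_mem hmem, Real.mul_rpow (Real.rpow_nonneg h _) hθ,
        ← Real.rpow_mul h, mul_comm, show s / 2 * q = q / 2 * s by ring]
    · rw [indicator_of_notMem hmem, indicator_of_notMem hmem, zero_mul, Real.zero_rpow hq.ne',
        mul_zero]
  rw [integral_congr_ae hslices, integral_const_mul, integral_indicator measurableSet_Ioo,
    ← integral_Ioc_eq_integral_Ioo, ← intervalIntegral.integral_of_le (by norm_num),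
    integral_one_sub_sq_rpow (by linarith [mul_nonneg (half_pos hq).le hs]), add_comm]

end Slices

/-- Recurrence for the mixed norms `θ⁽ᵈ⁾` of the indicators of the
Euclidean unit balls:
`θ⁽ᵈ⁺¹⁾(p₁,…,p_{d+1}) = θ⁽ᵈ⁾(p₁,…,p_d) · B(1/2, 1 + (p_{d+1}/2)·∑ᵢ 1/pᵢ)^{1/p_{d+1}}`. -/
theorem mixed_norm_ball_recurrence (d : ℕ) (p : Fin (d + 1) → ℝ) (hp : ∀ i, 1 ≤ p i) :
    mixedNorm (d + 1) p
        (Set.indicator {x : Fin (d + 1) → ℝ | ∑ i, x i ^ 2 ≤ 1} fun _ => 1)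
      = mixedNorm d (fun i => p i.castSucc)
          (Set.indicator {x : Fin d → ℝ | ∑ i, x i ^ 2 ≤ 1} fun _ => 1)
        * eulerBeta (1 / 2)
            (1 + p (Fin.last d) / 2 * ∑ i : Fin d, 1 / p i.castSucc)
          ^ (1 / p (Fin.last d)) := by
  have hp_pos (i : Fin (d + 1)) : 0 < p i := zero_lt_one.trans_le (hp i)
  have hθ := mixedNorm_nonneg d (fun i => p i.castSucc) (ballIndicator d)
  have hB : 0 < eulerBeta (1 / 2) (1 + p (Fin.last d) / 2 * ∑ i : Fin d, 1 / p i.castSucc) :=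
    ProbabilityTheory.beta_pos one_half_pos <| add_pos_of_pos_of_nonneg one_pos <|
      mul_nonneg (half_pos (hp_pos _)).le <|
        Finset.sum_nonneg fun i _ => (one_div_pos.2 (hp_pos _)).le
  change mixedNorm (d + 1) p (ballIndicator (d + 1)) = mixedNorm d _ (ballIndicator d) * _
  rw [mixedNorm, integral_mixedNorm_ballIndicator_snoc_rpow (fun i => hp_pos i.castSucc) (hp_pos _),
    Real.mul_rpow (Real.rpow_nonneg hθ _) hB.le, ← Real.rpow_mul hθ,
    mul_one_div_cancel (hp_pos _).ne', Real.rpow_one]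
end
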